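/- Let Hypothesis (C) hold, let (u, w) ∈ W^{1,1}(0,T; X) × W^{1,1}(0,T; W), x₀ ∈ Z(w(0)), and let ξ ∈ W^{1,1}(0,T; X) solve the sweeping process (GP) with x(t) = u(t) − ξ(t). Define A(t) = ⟨ξ'(t), ∇ₓG(x(t), w(t))⟩ and B(t) = ⟨u'(t), ∇ₓG(x(t), w(t))⟩ + ⟨w'(t), ∇_wG(x(t), w(t))⟩_{W,W'}. Then for a.e. t ∈ (0,T) either (i) ξ'(t) = 0 and (d/dt)G(x(t), w(t)) = B(t); or (ii) ξ'(t) ≠ 0, x(t) ∈ ∂Z(w(t)), A(t) = B(t) > 0, G(x(t), w(t)) = 1 = max_{τ∈[0,T]} G(x(τ), w(τ)), (d/dt)G(x(t), w(t)) = 0, and ξ'(t) = (A(t)/|∇ₓG(x(t), w(t))|²)·∇ₓG(x(t), w(t)). Moreover, for a.e. t ∈ (0,T) one has |B(t)| ≤ |∇ₓG(x(t), w(t))|·|u'(t)| + K₁|w'(t)|_W and |ξ'(t)| ≤ |u'(t)| + (K₁/c)|w'(t)|_W. -/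

import Mathlib

/-!
Where `ξ' ≠ 0`, testing the sweeping inequality with `z = x + s ξ'` for small `s > 0` shows
that no such point lies in `Z(w)`, so `x` is on `∂Z(w)` and `G(x, w) = 1` is the maximal value
of `τ ↦ G(x τ, w τ)`, whose derivative `B - A` (chain rule, `G` being `C¹` by continuity of its
partial derivatives) therefore vanishes. Every direction `d` with `⟪∇ₓG, d⟫ < 0` points into
`Z(w)`, and testing the inequality along `d` gives `⟪d, ξ'⟫ ≤ 0`; hence `ξ'` is a nonnegative
multiple of `∇ₓG`. The bounds follow from `A = B` and `|∇ₓG| ≥ c` on `∂Z(w)`.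
-/

open MeasureTheory Set Filter Metric
open scoped RealInnerProductSpace Topology

/-- `f ∈ W^{1,1}(0,T;Y)` with a.e. derivative `f'`: `f'` is Bochner integrable on `(0,T)`
and `f t = f 0 + ∫₀ᵗ f'` on `[0,T]`. -/
def IsW11 {Y : Type*} [NormedAddCommGroup Y] [NormedSpace ℝ Y] (T : ℝ) (f f' : ℝ → Y) : Prop :=
  IntegrableOn f' (Ioo 0 T) ∧ ∀ t ∈ Icc 0 T, f t = f 0 + ∫ s in (0:ℝ)..t, f' s

/-- Solution of the sweeping process (GP) with data `(u, w, x₀)`, where `ξ'` is the a.e.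
derivative of `ξ` and `x(t) = u(t) - ξ(t)`. -/
def IsGPSol {X W : Type*} [NormedAddCommGroup X] [InnerProductSpace ℝ X]
    (T r : ℝ) (Zs : W → Set X) (u : ℝ → X) (w : ℝ → W) (x₀ : X) (ξ ξ' : ℝ → X) : Prop :=
  (∀ t ∈ Icc 0 T, u t - ξ t ∈ Zs (w t)) ∧ u 0 - ξ 0 = x₀ ∧
    ∀ᵐ t ∂(volume.restrict (Ioo 0 T)), ∀ z ∈ Zs (w t),
      ⟪(u t - ξ t) - z, ξ' t⟫ + ‖ξ' t‖ / (2 * r) * ‖(u t - ξ t) - z‖ ^ 2 ≥ 0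

theorem IsW11.ae_hasDerivAt {Y : Type*} [NormedAddCommGroup Y] [NormedSpace ℝ Y]
    [CompleteSpace Y] {T : ℝ} {f f' : ℝ → Y} (hf : IsW11 T f f') :
    ∀ᵐ t ∂(volume.restrict (Ioo 0 T)), HasDerivAt f (f' t) t := by
  rcases le_or_gt T 0 with hT | hT
  · simp [Ioo_eq_empty hT.not_gt]
  have hint : IntervalIntegrable f' volume 0 T :=
    (intervalIntegrable_iff_integrableOn_Ioo_of_le hT.le).2 hf.1
  rw [ae_restrict_iff' measurableSet_Ioo]
  filter_upwards [hint.ae_hasDerivAt_integral] with t ht htT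
  have hprim := ht (Ioo_subset_Icc_self htT |> (uIcc_of_le hT.le).symm.subset) 0 left_mem_uIcc
  refine (hprim.const_add (f 0)).congr_of_eventuallyEq ?_
  filter_upwards [Ioo_mem_nhds htT.1 htT.2] with s hs using hf.2 s (Ioo_subset_Icc_self hs)

theorem nonpos_of_eventually_le_mul {x y : ℝ} (h : ∀ᶠ δ in 𝓝[>] 0, x ≤ δ * y) : x ≤ 0 := by
  have hlim : Tendsto (fun δ : ℝ => δ * y) (𝓝[>] 0) (𝓝 0) := by
    simpa using ((continuous_mul_const y).tendsto' 0 0 (zero_mul y)).mono_left nhdsWithin_le_nhds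
  exact ge_of_tendsto hlim h

section LineDeriv

variable {E F : Type*} [NormedAddCommGroup E] [NormedSpace ℝ E] [NormedAddCommGroup F]
  [NormedSpace ℝ F]

theorem hasLineDerivAt_of_tendsto_div {f : E → ℝ} {f' : ℝ} {x v : E}
    (h : Tendsto (fun t : ℝ => (f (x + t • v) - f x) / t) (𝓝[≠] 0) (𝓝 f')) :
    HasLineDerivAt ℝ f f' x v := by
  rw [hasLineDerivAt_iff_tendsto_slope_zero]
  simpa only [smul_eq_mul, div_eq_inv_mul] using h

theorem HasLineDerivAt.hasDerivAt_add_smul {f : E → F} {f' : F} {x v : E} {s : ℝ}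
    (h : HasLineDerivAt ℝ f f' (x + s • v) v) :
    HasDerivAt (fun t : ℝ => f (x + t • v)) f' s := by
  rw [hasDerivAt_iff_tendsto_slope_zero]
  simpa only [add_smul, add_assoc] using h.tendsto_slope_zero

theorem HasLineDerivAt.eventually_lt {f : E → ℝ} {f' : ℝ} {x v : E}
    (h : HasLineDerivAt ℝ f f' x v) (hf' : f' < 0) :
    ∀ᶠ s in 𝓝[>] (0:ℝ), f (x + s • v) < f x := by
  have hslope := h.tendsto_slope_zero.mono_left (nhdsGT_le_nhdsNE 0)
  filter_upwards [self_mem_nhdsWithin, hslope.eventually (gt_mem_nhds hf')] with s hs0 hs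
  rw [smul_eq_mul, inv_mul_lt_iff₀ hs0, mul_zero, sub_neg] at hs
  exact hs

theorem hasFDerivAt_of_hasLineDerivAt_of_continuousAt {f : E → F} {f' : E → E →L[ℝ] F} {x₀ : E}
    (hf : ∀ᶠ x in 𝓝 x₀, ∀ v, HasLineDerivAt ℝ f (f' x v) x v) (hf' : ContinuousAt f' x₀) :
    HasFDerivAt f (f' x₀) x₀ := by
  rw [hasFDerivAt_iff_isLittleO_nhds_zero, Asymptotics.isLittleO_iff]
  intro ε hε
  obtain ⟨δ, hδ, hball⟩ := Metric.eventually_nhds_iff_ball.1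
    (hf.and (hf'.eventually (closedBall_mem_nhds _ hε)))
  filter_upwards [ball_mem_nhds 0 hδ] with h hh
  have hseg : ∀ s ∈ Icc (0:ℝ) 1, x₀ + s • h ∈ ball x₀ δ := by
    intro s hs
    rw [mem_ball_iff_norm, add_sub_cancel_left, norm_smul, Real.norm_of_nonneg hs.1]
    rw [mem_ball_zero_iff] at hh
    nlinarith [norm_nonneg h, hs.2]
  have hmvt := norm_image_sub_le_of_norm_deriv_le_segment_01'
    (f := fun s : ℝ => f (x₀ + s • h) - s • f' x₀ h)
    (f' := fun s => f' (x₀ + s • h) h - f' x₀ h) (C := ε * ‖h‖)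
    (fun s hs => (((hball _ (hseg s hs)).1 h).hasDerivAt_add_smul.sub
      ((hasDerivAt_id s).smul_const (f' x₀ h)) |>.congr_deriv (by simp)).hasDerivWithinAt)
    (fun s hs => by
      refine ((f' (x₀ + s • h) - f' x₀).le_opNorm h).trans
        (mul_le_mul_of_nonneg_right ?_ (norm_nonneg h))
      simpa [dist_eq_norm] using (hball _ (hseg s (Ico_subset_Icc_self hs))).2)
  simpa [sub_sub, add_comm (f' x₀ h)] using hmvt

end LineDeriv

theorem continuous_uncurry_of_norm_sub_le {E₁ E₂ F : Type*} [SeminormedAddCommGroup E₁]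
    [SeminormedAddCommGroup E₂] [SeminormedAddCommGroup F] {g : E₁ → E₂ → F} {C : ℝ}
    (h : ∀ x x' y y', ‖g x y - g x' y'‖ ≤ C * (‖x - x'‖ + ‖y - y'‖)) : Continuous ↿g := by
  refine continuous_iff_continuousAt.2 fun p => ?_
  rw [ContinuousAt, tendsto_iff_norm_sub_tendsto_zero]
  refine squeeze_zero (fun _ => norm_nonneg _) (fun q => h q.1 p.1 q.2 p.2) ?_
  have hC : Continuous fun q : E₁ × E₂ => C * (‖q.1 - p.1‖ + ‖q.2 - p.2‖) := by fun_prop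
  simpa using hC.tendsto p

section Partial

variable {E₁ E₂ F : Type*} [NormedAddCommGroup E₁] [NormedSpace ℝ E₁] [NormedAddCommGroup E₂]
  [NormedSpace ℝ E₂] [NormedAddCommGroup F] [NormedSpace ℝ F]

theorem hasStrictFDerivAt_uncurry_of_hasLineDerivAt {f : E₁ → E₂ → F}
    {f₁ : E₁ → E₂ → E₁ →L[ℝ] F} {f₂ : E₁ → E₂ → E₂ →L[ℝ] F}
    (hf₁ : ∀ x y v, HasLineDerivAt ℝ (f · y) (f₁ x y v) x v)
    (hf₂ : ∀ x y v, HasLineDerivAt ℝ (f x ·) (f₂ x y v) y v)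
    (hc₁ : Continuous ↿f₁) (hc₂ : Continuous ↿f₂) (p : E₁ × E₂) :
    HasStrictFDerivAt ↿f ((↿f₁ p).coprod (↿f₂ p)) p :=
  hasStrictFDerivAt_uncurry_coprod
    (.of_forall fun q => hasFDerivAt_of_hasLineDerivAt_of_continuousAt
      (.of_forall fun x => hf₁ x q.2) (hc₁.comp (.prodMk_left q.2)).continuousAt)
    (.of_forall fun q => hasFDerivAt_of_hasLineDerivAt_of_continuousAt
      (.of_forall fun y => hf₂ q.1 y) (hc₂.comp (.prodMk_right q.1)).continuousAt)
    hc₁.continuousAt hc₂.continuousAt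

end Partial

section ProxNormal

variable {X : Type*} [NormedAddCommGroup X] [InnerProductSpace ℝ X]

/-- `(GP)` requires `ξ'(t)` to be an `r`-proximal normal to `Z(w(t))` at `x(t)`. -/
def IsProxNormal (r : ℝ) (Z : Set X) (a v : X) : Prop :=
  ∀ z ∈ Z, ⟪a - z, v⟫ + ‖v‖ / (2 * r) * ‖a - z‖ ^ 2 ≥ 0

variable {r : ℝ} {Z : Set X} {a v : X}

theorem IsProxNormal.inner_nonpos (h : IsProxNormal r Z a v) {d : X}
    (hd : ∀ᶠ s in 𝓝[>] (0:ℝ), a + s • d ∈ Z) : ⟪d, v⟫ ≤ 0 := by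
  refine nonpos_of_eventually_le_mul (y := ‖v‖ / (2 * r) * ‖d‖ ^ 2) ?_
  filter_upwards [self_mem_nhdsWithin, hd] with s (hs : 0 < s) hsd
  have hvi := h _ hsd
  rw [sub_add_cancel_left, inner_neg_left, norm_neg, real_inner_smul_left, norm_smul,
    Real.norm_of_nonneg hs.le] at hvi
  refine le_of_mul_le_mul_left ?_ hs
  nlinarith

theorem IsProxNormal.mem_frontier (h : IsProxNormal r Z a v) (ha : a ∈ Z)
    (hv : v ≠ 0) : a ∈ frontier Z := by
  refine ⟨subset_closure ha, fun hint => hv ?_⟩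
  have hline : Tendsto (fun s : ℝ => a + s • v) (𝓝[>] 0) (𝓝 a) := by
    have hcont : Continuous fun s : ℝ => a + s • v := by fun_prop
    simpa using (hcont.tendsto 0).mono_left nhdsWithin_le_nhds
  exact real_inner_self_nonpos.1
    (h.inner_nonpos (hline.eventually (mem_interior_iff_mem_nhds.1 hint)))

theorem eq_smul_of_inner_nonpos_of_inner_neg {g v : X} (hg : g ≠ 0)
    (h : ∀ d, ⟪g, d⟫ < 0 → ⟪d, v⟫ ≤ 0) : 0 ≤ ⟪v, g⟫ ∧ v = (⟪v, g⟫ / ‖g‖ ^ 2) • g := by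
  have hg2 : 0 < ‖g‖ ^ 2 := by positivity
  constructor
  · have := h (-g) (by rw [inner_neg_right, real_inner_self_eq_norm_sq]; linarith)
    rw [inner_neg_left, real_inner_comm] at this
    linarith
  -- the component `p` of `v` orthogonal to `g` is tested by the directions `p - δ • g`, `δ > 0`
  obtain ⟨p, hp⟩ : ∃ p, v = p + (⟪v, g⟫ / ‖g‖ ^ 2) • g := ⟨_, (sub_add_cancel _ _).symm⟩
  have hgp : ⟪g, p⟫ = 0 := by
    have := congrArg (⟪g, ·⟫) hp
    simp only [inner_add_right, real_inner_smul_right, real_inner_self_eq_norm_sq,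
      div_mul_cancel₀ _ hg2.ne', real_inner_comm v] at this
    linarith
  have hpv : ⟪p, v⟫ = ‖p‖ ^ 2 := by
    rw [hp, inner_add_right, real_inner_smul_right, real_inner_comm g p, hgp, mul_zero, add_zero,
      real_inner_self_eq_norm_sq]
  have hp0 : ‖p‖ ^ 2 ≤ 0 := by
    refine nonpos_of_eventually_le_mul (y := ⟪g, v⟫) ?_
    filter_upwards [self_mem_nhdsWithin] with δ (hδ : 0 < δ)
    have := h (p - δ • g) (by
      rw [inner_sub_right, hgp, real_inner_smul_right, real_inner_self_eq_norm_sq]; nlinarith)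
    rw [inner_sub_left, hpv, real_inner_smul_left] at this
    linarith
  rwa [norm_eq_zero.1 (show ‖p‖ = 0 by nlinarith [norm_nonneg p]), zero_add] at hp

end ProxNormal

section Constraint

variable {X W : Type*} [NormedAddCommGroup X] [InnerProductSpace ℝ X] [NormedAddCommGroup W]
  [NormedSpace ℝ W] {G : X → W → ℝ} {Gx : X → W → X} {Gw : X → W → StrongDual ℝ W}
  {u ξ : ℝ → X} {w : ℝ → W} {u' ξ' : X} {w' : W} {t : ℝ}

theorem hasDerivAt_uncurry_comp_sub
    (hG : ∀ x y, HasFDerivAt ↿G ((innerSL ℝ (Gx x y)).coprod (Gw x y)) (x, y))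
    (hu : HasDerivAt u u' t) (hξ : HasDerivAt ξ ξ' t) (hw : HasDerivAt w w' t) :
    HasDerivAt (fun τ => G (u τ - ξ τ) (w τ))
      (⟪u' - ξ', Gx (u t - ξ t) (w t)⟫ + Gw (u t - ξ t) (w t) w') t := by
  have h := (hG (u t - ξ t) (w t)).comp_hasDerivAt t ((hu.sub hξ).prodMk hw)
  refine h.congr_deriv ?_
  simp [real_inner_comm]

theorem sweeping_active_of_ne_zero
    (hG : ∀ x y, HasFDerivAt ↿G ((innerSL ℝ (Gx x y)).coprod (Gw x y)) (x, y))
    (hGx : ∀ x y, G x y = 1 → Gx x y ≠ 0) {r T : ℝ} (ht : t ∈ Ioo 0 T)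
    (hu : HasDerivAt u u' t) (hξ : HasDerivAt ξ ξ' t) (hw : HasDerivAt w w' t)
    (hmem : ∀ τ ∈ Icc 0 T, G (u τ - ξ τ) (w τ) ≤ 1)
    (hvi : IsProxNormal r {z | G z (w t) ≤ 1} (u t - ξ t) ξ') (hv : ξ' ≠ 0) :
    u t - ξ t ∈ frontier {z | G z (w t) ≤ 1} ∧
      ⟪ξ', Gx (u t - ξ t) (w t)⟫ = ⟪u', Gx (u t - ξ t) (w t)⟫ + Gw (u t - ξ t) (w t) w' ∧
      0 < ⟪ξ', Gx (u t - ξ t) (w t)⟫ ∧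
      G (u t - ξ t) (w t) = 1 ∧
      (∀ τ ∈ Icc 0 T, G (u τ - ξ τ) (w τ) ≤ G (u t - ξ t) (w t)) ∧
      HasDerivAt (fun τ => G (u τ - ξ τ) (w τ)) 0 t ∧
      ξ' = (⟪ξ', Gx (u t - ξ t) (w t)⟫ / ‖Gx (u t - ξ t) (w t)‖ ^ 2) • Gx (u t - ξ t) (w t) := by
  set a := u t - ξ t
  set g := Gx a (w t)
  have hGa : ∀ z, HasFDerivAt (G · (w t)) (innerSL ℝ (Gx z (w t))) z := fun z => by
    have h := (hG z (w t)).comp z (hasFDerivAt_prodMk_left (𝕜 := ℝ) z (w t))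
    rw [ContinuousLinearMap.coprod_comp_inl] at h
    exact h
  have hfront : a ∈ frontier {z | G z (w t) ≤ 1} :=
    hvi.mem_frontier (hmem t (Ioo_subset_Icc_self ht)) hv
  have hG1 : G a (w t) = 1 := frontier_le_subset_eq
    (continuous_iff_continuousAt.2 fun z => (hGa z).continuousAt) continuous_const hfront
  have hline : ∀ d, HasLineDerivAt ℝ (G · (w t)) ⟪g, d⟫ a d := fun d => by
    simpa using (hGa a).hasLineDerivAt d
  have hcone : ∀ d, ⟪g, d⟫ < 0 → ⟪d, ξ'⟫ ≤ 0 := fun d hd => hvi.inner_nonpos <| by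
    filter_upwards [(hline d).eventually_lt hd] with s hs using (hs.trans_eq hG1).le
  obtain ⟨hA, hcol⟩ := eq_smul_of_inner_nonpos_of_inner_neg (hGx a (w t) hG1) hcone
  have hmax : ∀ τ ∈ Icc 0 T, G (u τ - ξ τ) (w τ) ≤ G a (w t) := hG1 ▸ hmem
  have hderiv := hasDerivAt_uncurry_comp_sub hG hu hξ hw
  have hderiv0 : ⟪u' - ξ', g⟫ + Gw a (w t) w' = 0 := IsLocalMax.hasDerivAt_eq_zero
    (Filter.mem_of_superset (Ioo_mem_nhds ht.1 ht.2) fun τ hτ => hmax τ (Ioo_subset_Icc_self hτ))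
    hderiv
  refine ⟨hfront, ?_, hA.lt_of_ne fun h => hv ?_, hG1, hmax, hderiv0 ▸ hderiv, hcol⟩
  · rw [inner_sub_left] at hderiv0
    linarith
  · rw [hcol, ← h, zero_div, zero_smul]

end Constraint

theorem abs_inner_add_apply_le {X W : Type*} [NormedAddCommGroup X] [InnerProductSpace ℝ X]
    [NormedAddCommGroup W] [NormedSpace ℝ W] (x g : X) (φ : StrongDual ℝ W) (y : W) {K : ℝ}
    (hφ : ‖φ‖ ≤ K) : |⟪x, g⟫ + φ y| ≤ ‖g‖ * ‖x‖ + K * ‖y‖ :=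
  (abs_add_le _ _).trans <| add_le_add ((abs_real_inner_le_norm x g).trans_eq (mul_comm _ _))
    ((φ.le_opNorm y).trans (mul_le_mul_of_nonneg_right hφ (norm_nonneg y)))

theorem norm_le_of_eq_smul_of_inner_le {X : Type*} [NormedAddCommGroup X] [InnerProductSpace ℝ X]
    {v g : X} {c p q : ℝ} (hc : 0 < c) (hg : c ≤ ‖g‖) (hA : 0 ≤ ⟪v, g⟫)
    (hv : v = (⟪v, g⟫ / ‖g‖ ^ 2) • g) (hB : ⟪v, g⟫ ≤ ‖g‖ * p + q) (hq : 0 ≤ q) :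
    ‖v‖ ≤ p + q / c := by
  have hg0 : 0 < ‖g‖ := hc.trans_le hg
  have hnorm : ‖v‖ * ‖g‖ = ⟪v, g⟫ := by
    nth_rewrite 1 [hv]
    rw [norm_smul, Real.norm_of_nonneg (by positivity)]
    field_simp
  have hqc : q ≤ q / c * ‖g‖ := by
    rw [div_mul_eq_mul_div, le_div_iff₀ hc]
    exact mul_le_mul_of_nonneg_left hg hq
  refine le_of_mul_le_mul_right ?_ hg0
  nlinarith

theorem sweeping_dichotomy_general
    {X W : Type*} [NormedAddCommGroup X] [InnerProductSpace ℝ X] [CompleteSpace X]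
    [NormedAddCommGroup W] [NormedSpace ℝ W] [CompleteSpace W]
    (G : X → W → ℝ)
    (Zs : W → Set X) (hZ : ∀ w, Zs w = {z : X | G z w ≤ 1})
    (Gx : X → W → X)
    (lam c : ℝ) (hc : 0 < c)
    (hyp1 : ∀ (x : X) (w : W), G x w = 1 → c ≤ ‖Gx x w‖)
    (Gw : X → W → StrongDual ℝ W)
    (hgradxall : ∀ (x : X) (w : W), ∀ y : X,
      Tendsto (fun t : ℝ => (G (x + t • y) w - G x w) / t) (𝓝[≠] (0:ℝ)) (𝓝 ⟪Gx x w, y⟫))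
    (hgradw : ∀ (x : X) (w : W) (v : W),
      Tendsto (fun t : ℝ => (G x (w + t • v) - G x w) / t) (𝓝[≠] (0:ℝ)) (𝓝 (Gw x w v)))
    (K₁ C₀ C₁ : ℝ)
    (hbdw : ∀ (x : X) (w : W), ‖Gw x w‖ ≤ K₁)
    (hlipx : ∀ (x x' : X) (w w' : W), ‖Gx x w - Gx x' w'‖ ≤ C₀ * (‖x - x'‖ + ‖w - w'‖))
    (hlipw : ∀ (x x' : X) (w w' : W), ‖Gw x w - Gw x' w'‖ ≤ C₁ * (‖x - x'‖ + ‖w - w'‖))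
    (T : ℝ)
    (u u' : ℝ → X) (hu : IsW11 T u u')
    (w w' : ℝ → W) (hw : IsW11 T w w')
    (x₀ : X)
    (ξ ξ' : ℝ → X) (hξ : IsW11 T ξ ξ')
    (hsol : IsGPSol T (c / lam) Zs u w x₀ ξ ξ') :
    (∀ᵐ t ∂(volume.restrict (Ioo 0 T)),
      (ξ' t = 0 ∧ HasDerivAt (fun τ => G (u τ - ξ τ) (w τ))
          (⟪u' t, Gx (u t - ξ t) (w t)⟫ + Gw (u t - ξ t) (w t) (w' t)) t) ∨
      (ξ' t ≠ 0 ∧ (u t - ξ t) ∈ frontier (Zs (w t)) ∧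
        ⟪ξ' t, Gx (u t - ξ t) (w t)⟫ =
          ⟪u' t, Gx (u t - ξ t) (w t)⟫ + Gw (u t - ξ t) (w t) (w' t) ∧
        0 < ⟪ξ' t, Gx (u t - ξ t) (w t)⟫ ∧
        G (u t - ξ t) (w t) = 1 ∧
        (∀ τ ∈ Icc 0 T, G (u τ - ξ τ) (w τ) ≤ G (u t - ξ t) (w t)) ∧
        HasDerivAt (fun τ => G (u τ - ξ τ) (w τ)) 0 t ∧
        ξ' t = (⟪ξ' t, Gx (u t - ξ t) (w t)⟫ / ‖Gx (u t - ξ t) (w t)‖ ^ 2) •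
          Gx (u t - ξ t) (w t))) ∧
    (∀ᵐ t ∂(volume.restrict (Ioo 0 T)),
      |⟪u' t, Gx (u t - ξ t) (w t)⟫ + Gw (u t - ξ t) (w t) (w' t)| ≤
        ‖Gx (u t - ξ t) (w t)‖ * ‖u' t‖ + K₁ * ‖w' t‖ ∧
      ‖ξ' t‖ ≤ ‖u' t‖ + K₁ / c * ‖w' t‖) := by
  obtain rfl : Zs = fun w => {z | G z w ≤ 1} := funext hZ
  obtain ⟨hmem, -, hvi⟩ := hsol
  have hG : ∀ x y, HasFDerivAt ↿G ((innerSL ℝ (Gx x y)).coprod (Gw x y)) (x, y) := fun x y =>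
    (hasStrictFDerivAt_uncurry_of_hasLineDerivAt (f₁ := fun x y => innerSL ℝ (Gx x y))
      (fun x y v => hasLineDerivAt_of_tendsto_div (hgradxall x y v))
      (fun x y v => hasLineDerivAt_of_tendsto_div (hgradw x y v))
      ((innerSL ℝ).continuous.comp (continuous_uncurry_of_norm_sub_le hlipx))
      (continuous_uncurry_of_norm_sub_le hlipw) (x, y)).hasFDerivAt
  have hK₁ : 0 ≤ K₁ := (norm_nonneg _).trans (hbdw 0 0)
  refine eventually_and.1 ?_
  filter_upwards [hu.ae_hasDerivAt, hξ.ae_hasDerivAt, hw.ae_hasDerivAt, hvi,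
    ae_restrict_mem measurableSet_Ioo] with t hut hξt hwt hvit ht
  have hB := abs_inner_add_apply_le (u' t) (Gx (u t - ξ t) (w t)) (Gw (u t - ξ t) (w t)) (w' t)
    (hbdw _ _)
  by_cases hv : ξ' t = 0
  · refine ⟨.inl ⟨hv, by simpa [hv] using hasDerivAt_uncurry_comp_sub hG hut hξt hwt⟩, hB, ?_⟩
    rw [hv, norm_zero]
    positivity
  obtain ⟨hfront, hAB, hA, hG1, hactive⟩ := sweeping_active_of_ne_zero hG
    (fun x y h => norm_pos_iff.1 (hc.trans_le (hyp1 x y h))) ht hut hξt hwt hmem hvit hv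
  refine ⟨.inr ⟨hv, hfront, hAB, hA, hG1, hactive⟩, hB, ?_⟩
  rw [div_mul_eq_mul_div]
  exact norm_le_of_eq_smul_of_inner_le hc (hyp1 _ _ hG1) hA.le hactive.2.2
    (hAB.trans_le ((le_abs_self _).trans hB)) (by positivity)

/-- Lemma 3.2 of the paper: a.e. dichotomy for the solution of the sweeping process, and
the a priori bounds on `B` and `ξ′`. Here `A(t) = ⟪ξ′(t), ∇ₓG(x(t),w(t))⟫` and
`B(t) = ⟪u′(t), ∇ₓG(x(t),w(t))⟫ + ⟨w′(t), ∇_wG(x(t),w(t))⟩`. -/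
theorem sweeping_dichotomy
    {X W : Type*} [NormedAddCommGroup X] [InnerProductSpace ℝ X] [CompleteSpace X]
    [NormedAddCommGroup W] [NormedSpace ℝ W] [CompleteSpace W]
    (G : X → W → ℝ) (hGnonneg : ∀ (x : X) (w : W), 0 ≤ G x w)
    (hGlip : LocallyLipschitz (fun p : X × W => G p.1 p.2))
    (Zs : W → Set X) (hZ : ∀ w, Zs w = {z : X | G z w ≤ 1})
    (Gx : X → W → X)
    (hgradx : ∀ w : W, ∀ z ∈ Zs w, ∀ y : X,
      Tendsto (fun t : ℝ => (G (z + t • y) w - G z w) / t) (𝓝[≠] (0:ℝ)) (𝓝 ⟪Gx z w, y⟫))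
    (lam c L : ℝ) (hlam : 0 < lam) (hc : 0 < c) (hL : 0 < L)
    (μ₁ : W → ℝ → ℝ) (μ₂ : ℝ → ℝ)
    (hμ₁zero : ∀ w, μ₁ w 0 = 0) (hμ₂zero : μ₂ 0 = 0)
    (hμ₁top : ∀ w, Tendsto (μ₁ w) atTop atTop) (hμ₂top : Tendsto μ₂ atTop atTop)
    (hyp1 : ∀ (x : X) (w : W), G x w = 1 → c ≤ ‖Gx x w‖)
    (hyp2 : ∀ w : W, ∀ x ∈ Zs w, ∀ y ∈ Zs w, ‖Gx x w - Gx y w‖ ≤ μ₁ w ‖x - y‖)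
    (hyp3 : ∀ w : W, ∀ x ∈ frontier (Zs w), ∀ z ∈ Zs w,
      ⟪Gx x w - Gx z w, x - z⟫ ≥ -lam * ‖x - z‖ ^ 2)
    (hyp4 : ∀ (x : X) (w w' : W), |G x w - G x w'| ≤ L * ‖w - w'‖)
    (hyp5 : ∀ ρ > (0:ℝ), ∀ (w : W) (x : X), ρ ≤ infDist x (Zs w) → μ₂ ρ ≤ G x w - 1)
    (Gw : X → W → StrongDual ℝ W)
    (hgradxall : ∀ (x : X) (w : W), ∀ y : X,
      Tendsto (fun t : ℝ => (G (x + t • y) w - G x w) / t) (𝓝[≠] (0:ℝ)) (𝓝 ⟪Gx x w, y⟫))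
    (hgradw : ∀ (x : X) (w : W) (v : W),
      Tendsto (fun t : ℝ => (G x (w + t • v) - G x w) / t) (𝓝[≠] (0:ℝ)) (𝓝 (Gw x w v)))
    (K₀ K₁ C₀ C₁ : ℝ) (hK₀ : 0 < K₀) (hK₁ : 0 < K₁) (hC₀ : 0 < C₀) (hC₁ : 0 < C₁)
    (hbdx : ∀ (x : X) (w : W), ‖Gx x w‖ ≤ K₀)
    (hbdw : ∀ (x : X) (w : W), ‖Gw x w‖ ≤ K₁)
    (hlipx : ∀ (x x' : X) (w w' : W), ‖Gx x w - Gx x' w'‖ ≤ C₀ * (‖x - x'‖ + ‖w - w'‖))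
    (hlipw : ∀ (x x' : X) (w w' : W), ‖Gw x w - Gw x' w'‖ ≤ C₁ * (‖x - x'‖ + ‖w - w'‖))
    (T : ℝ) (hT : 0 < T)
    (u u' : ℝ → X) (hu : IsW11 T u u')
    (w w' : ℝ → W) (hw : IsW11 T w w')
    (x₀ : X) (hx₀ : x₀ ∈ Zs (w 0))
    (ξ ξ' : ℝ → X) (hξ : IsW11 T ξ ξ')
    (hsol : IsGPSol T (c / lam) Zs u w x₀ ξ ξ') :
    (∀ᵐ t ∂(volume.restrict (Ioo 0 T)),
      (ξ' t = 0 ∧ HasDerivAt (fun τ => G (u τ - ξ τ) (w τ))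
          (⟪u' t, Gx (u t - ξ t) (w t)⟫ + Gw (u t - ξ t) (w t) (w' t)) t) ∨
      (ξ' t ≠ 0 ∧ (u t - ξ t) ∈ frontier (Zs (w t)) ∧
        ⟪ξ' t, Gx (u t - ξ t) (w t)⟫ =
          ⟪u' t, Gx (u t - ξ t) (w t)⟫ + Gw (u t - ξ t) (w t) (w' t) ∧
        0 < ⟪ξ' t, Gx (u t - ξ t) (w t)⟫ ∧
        G (u t - ξ t) (w t) = 1 ∧
        (∀ τ ∈ Icc 0 T, G (u τ - ξ τ) (w τ) ≤ G (u t - ξ t) (w t)) ∧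
        HasDerivAt (fun τ => G (u τ - ξ τ) (w τ)) 0 t ∧
        ξ' t = (⟪ξ' t, Gx (u t - ξ t) (w t)⟫ / ‖Gx (u t - ξ t) (w t)‖ ^ 2) •
          Gx (u t - ξ t) (w t))) ∧
    (∀ᵐ t ∂(volume.restrict (Ioo 0 T)),
      |⟪u' t, Gx (u t - ξ t) (w t)⟫ + Gw (u t - ξ t) (w t) (w' t)| ≤
        ‖Gx (u t - ξ t) (w t)‖ * ‖u' t‖ + K₁ * ‖w' t‖ ∧
      ‖ξ' t‖ ≤ ‖u' t‖ + K₁ / c * ‖w' t‖) :=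
  sweeping_dichotomy_general G Zs hZ Gx lam c hc hyp1 Gw hgradxall hgradw K₁ C₀ C₁ hbdw hlipx hlipw
    T u u' hu w w' hw x₀ ξ ξ' hξ hsol
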